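/- Let L be a finite distributive lattice. A function f : L → L is a join-endomorphism if and only if for every e ∈ L, f(e) = ⨆ { f(e') | e' ≤ e and e' is join-irreducible }. -/

import Mathlib

/-!
A join-endomorphism preserves finite joins, and every element of a finite lattice is the join of
the join-irreducibles below it, so `f e` is the join of their images. Conversely, if `f e` is always
that join then `f` is monotone, `f ⊥ = ⊥` because no join-irreducible lies below `⊥`, and
`f (a ⊔ b) ≤ f a ⊔ f b` because in a distributive lattice a join-irreducible below `a ⊔ b` lies
below `a` or below `b`.
-/

def IsJoinEndo {L : Type*} [Lattice L] [OrderBot L] (f : L → L) : Prop :=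
  f ⊥ = ⊥ ∧ ∀ a b, f (a ⊔ b) = f a ⊔ f b

namespace IsJoinEndo

variable {L : Type*} [Lattice L] [OrderBot L] {f : L → L}

def toSupBotHom (hf : IsJoinEndo f) : SupBotHom L L where
  toFun := f
  map_sup' := hf.2
  map_bot' := hf.1

theorem monotone (hf : IsJoinEndo f) : Monotone f :=
  OrderHomClass.mono hf.toSupBotHom

theorem isLUB_image_supIrred_le [WellFoundedLT L] (hf : IsJoinEndo f) (e : L) :
    IsLUB {x : L | ∃ e' : L, e' ≤ e ∧ SupIrred e' ∧ x = f e'} (f e) := by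
  refine ⟨?_, fun u hu => ?_⟩
  · rintro x ⟨e', he', -, rfl⟩
    exact hf.monotone he'
  · obtain ⟨s, rfl, hs⟩ := exists_supIrred_decomposition e
    calc f (s.sup id) = s.sup f := map_finset_sup hf.toSupBotHom s id
      _ ≤ u := Finset.sup_le fun b hb => hu ⟨b, Finset.le_sup (f := id) hb, hs hb, rfl⟩

end IsJoinEndo

theorem monotone_of_isLUB_image_supIrred_le {L : Type*} [SemilatticeSup L] {f : L → L}
    (h : ∀ e : L, IsLUB {x : L | ∃ e' : L, e' ≤ e ∧ SupIrred e' ∧ x = f e'} (f e)) :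
    Monotone f := fun a b hab =>
  (h a).2 fun _ ⟨e', he', hirr, hx⟩ => (h b).1 ⟨e', he'.trans hab, hirr, hx⟩

theorem isJoinEndo_of_isLUB_image_supIrred_le {L : Type*} [DistribLattice L] [OrderBot L]
    {f : L → L}
    (h : ∀ e : L, IsLUB {x : L | ∃ e' : L, e' ≤ e ∧ SupIrred e' ∧ x = f e'} (f e)) :
    IsJoinEndo f := by
  have hmono := monotone_of_isLUB_image_supIrred_le h
  refine ⟨le_bot_iff.1 <| (h ⊥).2 ?_, fun a b => le_antisymm ((h (a ⊔ b)).2 ?_) ?_⟩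
  · rintro _ ⟨e', he', hirr, -⟩
    exact absurd (le_bot_iff.1 he' ▸ hirr) not_supIrred_bot
  · rintro _ ⟨e', he', hirr, rfl⟩
    rcases hirr.supPrime.le_sup.1 he' with ha | hb
    · exact le_sup_of_le_left (hmono ha)
    · exact le_sup_of_le_right (hmono hb)
  · exact sup_le (hmono le_sup_left) (hmono le_sup_right)

theorem join_endo_iff_sup_of_irreducibles {L : Type*} [DistribLattice L] [OrderBot L]
    [Fintype L] (f : L → L) :
    IsJoinEndo f ↔
      ∀ e : L, IsLUB {x : L | ∃ e' : L, e' ≤ e ∧ SupIrred e' ∧ x = f e'} (f e) :=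
  ⟨fun hf => hf.isLUB_image_supIrred_le, isJoinEndo_of_isLUB_image_supIrred_le⟩
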